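/- arXiv:1308.3266 — 2 statements merged into one kernel-verified Lean document; each statement's English description precedes it below -/
import Mathlib

section
/- Let f and g be nonzero polynomials in k[x₀,…,x_n] with a fixed monomial order. If the leading monomials of f and g are coprime (their gcd is 1), then the S-polynomial S(f,g) reduces to zero upon division by the pair {f, g}; equivalently, S(f,g) can be written as q₁·f + q₂·g where the leading monomial of each product q_i·(f or g) is at most the leading monomial of S(f,g). -/
open MvPolynomial
open scoped MonomialOrder

/-- The leading exponent (leading monomial) of a multivariate polynomial with
respect to a monomial order. -/
noncomputable def leadExp {σ K : Type*} [Field K] (m : MonomialOrder σ)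
    (f : MvPolynomial σ K) : σ →₀ ℕ :=
  m.toSyn.symm (f.support.sup fun d => m.toSyn d)

/-- The leading coefficient of a multivariate polynomial with respect to a
monomial order. -/
noncomputable def leadCoeff {σ K : Type*} [Field K] (m : MonomialOrder σ)
    (f : MvPolynomial σ K) : K :=
  f.coeff (leadExp m f)

/-- The S-polynomial `S(f,g) = (lcm(LM f, LM g)/LT f)·f − (lcm(LM f, LM g)/LT g)·g`. -/
noncomputable def sPoly {σ K : Type*} [Field K] (m : MonomialOrder σ)
    (f g : MvPolynomial σ K) : MvPolynomial σ K :=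
  monomial (leadExp m f ⊔ leadExp m g - leadExp m f) (leadCoeff m f)⁻¹ * f -
    monomial (leadExp m f ⊔ leadExp m g - leadExp m g) (leadCoeff m g)⁻¹ * g

/-!
Write `f = LT(f) + f'` and `g = LT(g) + g'`. When `LM(f)` and `LM(g)` are coprime their lcm
is their product, and `S(f,g)` is, up to the unit `1/(lc f · lc g)`,
`LT(g)·f − LT(f)·g = f'·g − g'·f`. The two products cannot cancel at the top: equal leading
monomials would give `LM(f') + LM(g) = LM(g') + LM(f)`, and coprimality then forces
`LM(f) ∣ LM(f')`, contradicting `LM(f') < LM(f)`. So the leading monomial of `S(f,g)` is the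
larger of those of `f'·g` and `g'·f`, which gives the standard representation with
`q₁ = −g'/(lc f · lc g)` and `q₂ = f'/(lc f · lc g)`.
-/

theorem leadExp_eq_degree {σ K : Type*} [Field K] (m : MonomialOrder σ)
    (f : MvPolynomial σ K) : leadExp m f = m.degree f := rfl

theorem leadCoeff_eq_leadingCoeff {σ K : Type*} [Field K] (m : MonomialOrder σ)
    (f : MvPolynomial σ K) : leadCoeff m f = m.leadingCoeff f := rfl

theorem Finsupp.tsub_eq_self_of_inf_eq_zero {σ : Type*} {a b : σ →₀ ℕ} (h : a ⊓ b = 0) :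
    a - b = a := by
  ext i
  have hi := DFunLike.congr_fun h i
  simp only [Finsupp.inf_apply, Finsupp.coe_zero, Pi.zero_apply] at hi
  simp only [Finsupp.coe_tsub, Pi.sub_apply]
  omega

namespace MonomialOrder

variable {σ : Type*} (m : MonomialOrder σ)

theorem add_ne_add_of_inf_eq_zero {a b d d' : σ →₀ ℕ} (hab : a ⊓ b = 0) (hd : d ≺[m] a) :
    d + b ≠ d' + a := by
  intro heq
  have had : a ≤ d := calc
    a = a - b := (Finsupp.tsub_eq_self_of_inf_eq_zero hab).symm
    _ ≤ d' + a - b := tsub_le_tsub_right le_add_self b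
    _ = d := by rw [← heq, add_tsub_cancel_right]
  exact (m.toSyn_monotone had).not_gt hd

section CommRing

variable {R : Type*} [CommRing R]

theorem degree_le_degree_sub {p q : MvPolynomial σ R}
    (h : p ≠ 0 → q ≠ 0 → m.degree p ≠ m.degree q) :
    m.degree p ≼[m] m.degree (p - q) ∧ m.degree q ≼[m] m.degree (p - q) := by
  rcases eq_or_ne p 0 with rfl | hp
  · simp [degree_zero]
  rcases eq_or_ne q 0 with rfl | hq
  · simp [degree_zero]
  rcases (m.toSyn.injective.ne (h hp hq)).lt_or_gt with hlt | hlt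
  · rw [← neg_sub, degree_neg, degree_sub_of_lt hlt]
    exact ⟨hlt.le, le_rfl⟩
  · rw [degree_sub_of_lt hlt]
    exact ⟨le_rfl, hlt.le⟩

theorem sPolynomial_eq_of_inf_degree_eq_zero {f g : MvPolynomial σ R}
    (h : m.degree f ⊓ m.degree g = 0) :
    m.sPolynomial f g = (f - m.leadingTerm f) * g - (g - m.leadingTerm g) * f := by
  rw [sPolynomial, Finsupp.tsub_eq_self_of_inf_eq_zero h,
    Finsupp.tsub_eq_self_of_inf_eq_zero (inf_comm (m.degree f) _ ▸ h)]
  simp only [leadingTerm]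
  ring

theorem degree_sub_leadingTerm_mul_ne [NoZeroDivisors R] {f g : MvPolynomial σ R}
    (h : m.degree f ⊓ m.degree g = 0) (hf : f - m.leadingTerm f ≠ 0)
    (hg : g - m.leadingTerm g ≠ 0) :
    m.degree ((f - m.leadingTerm f) * g) ≠ m.degree ((g - m.leadingTerm g) * f) := by
  have hf₀ := m.degree_ne_zero_of_sub_leadingTerm_ne_zero hf
  have hg₀ := m.degree_ne_zero_of_sub_leadingTerm_ne_zero hg
  rw [degree_mul hf (ne_zero_of_degree_ne_zero hg₀),
    degree_mul hg (ne_zero_of_degree_ne_zero hf₀)]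
  exact m.add_ne_add_of_inf_eq_zero h (degree_sub_leadingTerm_lt_degree hf₀)

end CommRing

end MonomialOrder

open MonomialOrder

theorem sPoly_eq_smul_sPolynomial {σ K : Type*} [Field K] (m : MonomialOrder σ)
    {f g : MvPolynomial σ K} (hf : f ≠ 0) (hg : g ≠ 0) :
    sPoly m f g = ((m.leadingCoeff f)⁻¹ * (m.leadingCoeff g)⁻¹) • m.sPolynomial f g := by
  have hcf : m.leadingCoeff f ≠ 0 := m.leadingCoeff_ne_zero_iff.mpr hf
  have hcg : m.leadingCoeff g ≠ 0 := m.leadingCoeff_ne_zero_iff.mpr hg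
  rw [sPoly, leadExp_eq_degree, leadExp_eq_degree, leadCoeff_eq_leadingCoeff,
    leadCoeff_eq_leadingCoeff, sPolynomial_def, smul_sub, ← smul_mul_assoc, ← smul_mul_assoc,
    smul_monomial, smul_monomial, smul_eq_mul, smul_eq_mul, inv_mul_cancel_right₀ hcg,
    mul_comm (m.leadingCoeff f)⁻¹, inv_mul_cancel_right₀ hcf]

/-- If the leading monomials of nonzero `f` and `g` are coprime, then `S(f,g)`
reduces to zero via `f, g`: it has a standard representation `S(f,g) = q₁·f + q₂·g`
with the leading monomial of each `qᵢ·(f or g)` at most that of `S(f,g)`. -/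
theorem sPoly_reduces_to_zero_of_coprime_leadExp {σ K : Type*} [Field K]
    (m : MonomialOrder σ) (f g : MvPolynomial σ K) (hf : f ≠ 0) (hg : g ≠ 0)
    (hcop : leadExp m f ⊓ leadExp m g = 0) :
    ∃ q₁ q₂ : MvPolynomial σ K,
      sPoly m f g = q₁ * f + q₂ * g ∧
      (leadExp m (q₁ * f) ≼[m] leadExp m (sPoly m f g)) ∧
      (leadExp m (q₂ * g) ≼[m] leadExp m (sPoly m f g)) := by
  set e := (m.leadingCoeff f)⁻¹ * (m.leadingCoeff g)⁻¹
  have he : IsRegular e := .of_ne_zero <| mul_ne_zero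
    (inv_ne_zero (m.leadingCoeff_ne_zero_iff.mpr hf))
    (inv_ne_zero (m.leadingCoeff_ne_zero_iff.mpr hg))
  set f' := f - m.leadingTerm f
  set g' := g - m.leadingTerm g
  have hS : sPoly m f g = e • (f' * g - g' * f) := by
    rw [sPoly_eq_smul_sPolynomial m hf hg, m.sPolynomial_eq_of_inf_degree_eq_zero hcop]
  obtain ⟨hf'g, hg'f⟩ := m.degree_le_degree_sub fun hP hQ =>
    m.degree_sub_leadingTerm_mul_ne hcop (left_ne_zero_of_mul hP) (left_ne_zero_of_mul hQ)
  refine ⟨e • -g', e • f', ?_, ?_, ?_⟩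
  · rw [hS, smul_mul_assoc, smul_mul_assoc, ← smul_add, neg_mul, neg_add_eq_sub]
  · simpa only [leadExp_eq_degree, hS, smul_mul_assoc, neg_mul, degree_smul_of_isRegular he,
      degree_neg] using hg'f
  · simpa only [leadExp_eq_degree, hS, smul_mul_assoc, degree_smul_of_isRegular he] using hf'g
end

section
/- Let p, q, r, s be monomials in k[x₀,…,x_n] with a fixed monomial order. Whichever of p·s − r·q or r·q − p·s has its leading term written first (i.e., is correctly ordered) reduces to zero upon division by the correctly ordered versions of the binomials p − q and r − s. In particular, p·s − r·q lies in the ideal generated by p − q and r − s. -/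
open MvPolynomial
open scoped MonomialOrder

namespace MonomialOrder

variable {σ R : Type*} [CommRing R] (m : MonomialOrder σ)

theorem toSyn_degree_monomial_sub_monomial_le (u v : σ →₀ ℕ) :
    m.toSyn (m.degree (monomial u (1 : R) - monomial v 1)) ≤ m.toSyn u ⊔ m.toSyn v :=
  m.degree_sub_le.trans (sup_le_sup (m.degree_monomial_le 1) (m.degree_monomial_le 1))

theorem toSyn_degree_monomial_sub_monomial [Nontrivial R] {u v : σ →₀ ℕ} (h : u ≠ v) :
    m.toSyn (m.degree (monomial u (1 : R) - monomial v 1)) = m.toSyn u ⊔ m.toSyn v := by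
  classical
  refine (m.toSyn_degree_monomial_sub_monomial_le u v).antisymm
    (sup_le (m.le_degree ?_) (m.le_degree ?_))
  · simp [mem_support_iff, coeff_monomial, h.symm]
  · simp [mem_support_iff, coeff_monomial, h]

theorem degree_monomial_sub_monomial_le [Nontrivial R] {u v w z : σ →₀ ℕ} (hwz : w ≠ z)
    (hu : m.toSyn u ≤ m.toSyn w ⊔ m.toSyn z) (hv : m.toSyn v ≤ m.toSyn w ⊔ m.toSyn z) :
    m.degree (monomial u (1 : R) - monomial v 1) ≼[m]
      m.degree (monomial w (1 : R) - monomial z 1) := by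
  rw [m.toSyn_degree_monomial_sub_monomial hwz]
  exact (m.toSyn_degree_monomial_sub_monomial_le u v).trans (sup_le hu hv)

theorem monomial_mul_monomial_sub_monomial (w u v : σ →₀ ℕ) :
    monomial w (1 : R) * (monomial u 1 - monomial v 1) =
      monomial (u + w) 1 - monomial (v + w) 1 := by
  simp only [mul_sub, monomial_mul, one_mul, add_comm w]

theorem exists_cross_difference_repr [Nontrivial R] (a b c d : σ →₀ ℕ) :
    ∃ q₁ q₂ : MvPolynomial σ R,
      monomial a 1 * monomial d 1 - monomial c 1 * monomial b 1 =
          q₁ * (monomial a 1 - monomial b 1) + q₂ * (monomial c 1 - monomial d 1) ∧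
      m.degree (q₁ * (monomial a (1 : R) - monomial b 1)) ≼[m]
        m.degree (monomial a (1 : R) * monomial d 1 - monomial c 1 * monomial b 1) ∧
      m.degree (q₂ * (monomial c (1 : R) - monomial d 1)) ≼[m]
        m.degree (monomial a (1 : R) * monomial d 1 - monomial c 1 * monomial b 1) := by
  by_cases hzero : a + d = c + b
  · refine ⟨0, 0, ?_, ?_, ?_⟩ <;> simp [monomial_mul, hzero]
  simp only [monomial_mul, one_mul]
  rcases le_total (m.toSyn c) (m.toSyn d) with hcd | hdc
  · have hmid : m.toSyn (a + c) ≤ m.toSyn (a + d) := by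
      simp only [map_add]
      gcongr
    refine ⟨monomial c 1, -monomial a 1, ?_, ?_, ?_⟩
    · simp only [mul_sub, neg_mul, monomial_mul, one_mul]
      abel_nf
    · rw [monomial_mul_monomial_sub_monomial, add_comm b c]
      exact m.degree_monomial_sub_monomial_le hzero (le_sup_of_le_left hmid) le_sup_right
    · rw [neg_mul, ← mul_neg, neg_sub, monomial_mul_monomial_sub_monomial, add_comm d,
        add_comm c]
      exact m.degree_monomial_sub_monomial_le hzero le_sup_left (le_sup_of_le_left hmid)
  · have hmid : m.toSyn (b + d) ≤ m.toSyn (c + b) := by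
      simp only [map_add, add_comm (m.toSyn c)]
      gcongr
    refine ⟨monomial d 1, -monomial b 1, ?_, ?_, ?_⟩
    · simp only [mul_sub, neg_mul, monomial_mul, one_mul]
      abel_nf
    · rw [monomial_mul_monomial_sub_monomial]
      exact m.degree_monomial_sub_monomial_le hzero le_sup_left (le_sup_of_le_right hmid)
    · rw [neg_mul, ← mul_neg, neg_sub, monomial_mul_monomial_sub_monomial, add_comm d]
      exact m.degree_monomial_sub_monomial_le hzero (le_sup_of_le_right hmid) le_sup_right

end MonomialOrder

/-- For monomials `p, q, r, s`, the (correctly ordered version of) `p·s − r·q` reduces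
to zero via the (correctly ordered versions of the) binomials `p − q` and `r − s`:
there is a standard representation `p·s − r·q = q₁·(p − q) + q₂·(r − s)` in which the
leading monomial of each summand is at most that of `p·s − r·q`.  (Since leading
exponents are insensitive to sign, this simultaneously captures whichever of
`p·s − r·q` or `r·q − p·s` is correctly ordered.)  In particular, `p·s − r·q` lies in
the ideal generated by `p − q` and `r − s`. -/
theorem monomial_cross_difference_reduces {σ K : Type*} [Field K]
    (m : MonomialOrder σ) (a b c d : σ →₀ ℕ) :
    (∃ q₁ q₂ : MvPolynomial σ K,
      monomial a 1 * monomial d 1 - monomial c 1 * monomial b 1 =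
          q₁ * (monomial a 1 - monomial b 1) + q₂ * (monomial c 1 - monomial d 1) ∧
      (leadExp m (q₁ * (monomial a (1 : K) - monomial b 1)) ≼[m]
        leadExp m (monomial a (1 : K) * monomial d 1 - monomial c 1 * monomial b 1)) ∧
      (leadExp m (q₂ * (monomial c (1 : K) - monomial d 1)) ≼[m]
        leadExp m (monomial a (1 : K) * monomial d 1 - monomial c 1 * monomial b 1))) ∧
    monomial a 1 * monomial d 1 - monomial c 1 * monomial b 1 ∈
      Ideal.span {monomial a (1 : K) - monomial b 1, monomial c 1 - monomial d 1} := by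
  simp only [leadExp_eq_degree]
  obtain ⟨q₁, q₂, hrepr, hq₁, hq₂⟩ := m.exists_cross_difference_repr (R := K) a b c d
  refine ⟨⟨q₁, q₂, hrepr, hq₁, hq₂⟩, ?_⟩
  rw [hrepr]
  exact Ideal.add_mem _ (Ideal.mul_mem_left _ _ (Ideal.subset_span (by simp)))
    (Ideal.mul_mem_left _ _ (Ideal.subset_span (by simp)))
end
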